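/- Let X ∈ 𝒳ⁿ be a random k-sparse vector over a finite alphabet 𝒳 for its nonzero entries, with support T uniformly distributed over all C(n,k) subsets of size k and nonzero entries i.i.d. uniform on 𝒳 given T. If X̂ is any reconstruction with H(X̂) ≤ nR and P[X ≠ X̂] → 0 (so Fano's error term ε_n → 0), then nR ≥ k·log(n/k) + k·log|𝒳| − nε_n − o(k). -/

import Mathlib

/-!
Every value of the pair `(X, X̂)` has probability at most that of the corresponding value of `X`,
i.e. at most `1 / (C(n,k) |A|^k)`, so the joint entropy is at least
`log₂ C(n,k) + k log₂ |A| ≥ k log₂ (n/k) + k log₂ |A|`. Since `H(X, X̂) = H(X̂) + H(X | X̂)`,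
the rate bound `H(X̂) ≤ nR` and Fano's bound `H(X | X̂) ≤ n εₙ` give the claim.
-/

open MeasureTheory

/-- Shannon entropy (base 2) of a random variable taking values in the finite set
`S`, with the convention `0 · log 0 = 0` (note `Real.logb 2 0 = 0`). -/
noncomputable def ent {Ω α : Type*} [MeasurableSpace Ω] (μ : Measure Ω)
    (X : Ω → α) (S : Finset α) : ℝ :=
  -∑ a ∈ S, (μ (X ⁻¹' {a})).toReal * Real.logb 2 (μ (X ⁻¹' {a})).toReal

open Finset Real

theorem Nat.pow_le_pow_mul_choose {n k : ℕ} (hkn : k ≤ n) : n ^ k ≤ k ^ k * n.choose k := by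
  -- factorwise, `n (k - i) ≤ k (n - i)` for `i < k ≤ n`
  have hfactor : ∀ i ∈ range k, n * (k - i) ≤ k * (n - i) := fun i _ => by
    rw [Nat.mul_sub, Nat.mul_sub, Nat.mul_comm n k]
    exact Nat.sub_le_sub_left (Nat.mul_le_mul_right i hkn) _
  have hprod : n ^ k * k.factorial ≤ k ^ k * n.descFactorial k := by
    simpa only [prod_mul_distrib, prod_const, card_range, ← Nat.descFactorial_eq_prod_range,
      Nat.descFactorial_self] using prod_le_prod' hfactor
  rw [Nat.descFactorial_eq_factorial_mul_choose, Nat.mul_left_comm] at hprod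
  exact Nat.le_of_mul_le_mul_right (hprod.trans_eq (Nat.mul_comm _ _)) (Nat.factorial_pos k)

theorem mul_logb_div_le_logb_choose {n k : ℕ} (hkn : k ≤ n) :
    k * logb 2 ((n : ℝ) / k) ≤ logb 2 (n.choose k) := by
  rcases k.eq_zero_or_pos with rfl | hk
  · simp
  have hpow : ((n : ℝ) / k) ^ k ≤ n.choose k := by
    rw [div_pow, div_le_iff₀ (by positivity), mul_comm]
    exact_mod_cast Nat.pow_le_pow_mul_choose hkn
  rw [← logb_pow]
  exact logb_le_logb_of_le one_lt_two (by have : 0 < n := hk.trans_le hkn; positivity) hpow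

section Entropy

variable {Ω α : Type*} [MeasurableSpace Ω] {μ : Measure Ω} {X : Ω → α} {S : Finset α}

-- The fibres `X ⁻¹' {a}` need not be measurable, so only subadditivity is available.
theorem one_le_sum_toReal_measure_preimage [IsProbabilityMeasure μ] (hX : ∀ ω, X ω ∈ S) :
    1 ≤ ∑ a ∈ S, (μ (X ⁻¹' {a})).toReal := by
  have hcover : Set.univ ⊆ ⋃ a ∈ S, X ⁻¹' {a} := fun ω _ => Set.mem_biUnion (hX ω) rfl
  have hle : μ Set.univ ≤ ∑ a ∈ S, μ (X ⁻¹' {a}) :=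
    (measure_mono hcover).trans (measure_biUnion_finset_le _ _)
  rw [← ENNReal.toReal_sum fun a _ => measure_ne_top μ _, ← probReal_univ (μ := μ)]
  exact ENNReal.toReal_mono (ENNReal.sum_ne_top.mpr fun a _ => measure_ne_top μ _) hle

theorem logb_le_ent_of_toReal_measure_preimage_le [IsProbabilityMeasure μ] {D : ℝ} (hD : 1 ≤ D)
    (hX : ∀ ω, X ω ∈ S) (hmass : ∀ a ∈ S, (μ (X ⁻¹' {a})).toReal ≤ 1 / D) :
    logb 2 D ≤ ent μ X S := by
  set q : α → ℝ := fun a => (μ (X ⁻¹' {a})).toReal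
  have hterm : ∀ a ∈ S, q a * logb 2 D ≤ -(q a * logb 2 (q a)) := fun a ha => by
    rcases (ENNReal.toReal_nonneg : 0 ≤ q a).eq_or_lt with h0 | h0
    · simp [q, ← h0]
    have hlog : logb 2 (q a) ≤ -logb 2 D := by
      rw [← logb_inv, ← one_div]
      exact logb_le_logb_of_le one_lt_two h0 (hmass a ha)
    nlinarith
  calc logb 2 D ≤ (∑ a ∈ S, q a) * logb 2 D :=
        le_mul_of_one_le_left (logb_nonneg one_lt_two hD) (one_le_sum_toReal_measure_preimage hX)
    _ ≤ ∑ a ∈ S, -(q a * logb 2 (q a)) := by rw [sum_mul]; exact sum_le_sum hterm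
    _ = ent μ X S := by rw [ent, sum_neg_distrib]

end Entropy

theorem stmt19_general {Ω : Type*} [MeasurableSpace Ω] (μ : Measure Ω) [IsProbabilityMeasure μ]
    (n k : ℕ) (hkn : k ≤ n)
    (A : Finset ℝ) (hA : A.Nonempty)
    (X Xhat : Ω → Fin n → ℝ)
    (V : Finset (Fin n → ℝ))
    (hXV : ∀ ω, X ω ∈ V)
    (hunif : ∀ x ∈ V, (μ (X ⁻¹' {x})).toReal = 1 / (n.choose k * A.card ^ k))
    (S2 : Finset (Fin n → ℝ)) (hS2 : ∀ ω, Xhat ω ∈ S2)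
    (R εn : ℝ)
    (hrate : ent μ Xhat S2 ≤ n * R)
    (hfano : ent μ (fun ω => (X ω, Xhat ω)) (V ×ˢ S2) - ent μ Xhat S2 ≤ n * εn) :
    k * Real.logb 2 ((n : ℝ) / k) + k * Real.logb 2 (A.card) - n * εn ≤ n * R := by
  set D : ℝ := n.choose k * A.card ^ k
  have hD : 1 ≤ D := one_le_mul_of_one_le_of_one_le (mod_cast Nat.choose_pos hkn)
    (one_le_pow₀ (mod_cast hA.card_pos))
  have hjoint : logb 2 D ≤ ent μ (fun ω => (X ω, Xhat ω)) (V ×ˢ S2) := by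
    refine logb_le_ent_of_toReal_measure_preimage_le hD (fun ω => mem_product.mpr ⟨hXV ω, hS2 ω⟩) ?_
    rintro ⟨x, y⟩ hxy
    rw [← hunif x (mem_product.mp hxy).1]
    exact ENNReal.toReal_mono (measure_ne_top μ _)
      (measure_mono fun ω hω => congrArg Prod.fst (Set.mem_singleton_iff.mp hω))
  have hlogD : logb 2 D = logb 2 (n.choose k) + k * logb 2 A.card := by
    have hcard : (0 : ℝ) < A.card := mod_cast hA.card_pos
    rw [logb_mul (mod_cast (Nat.choose_pos hkn).ne') (by positivity), logb_pow]
  linarith [mul_logb_div_le_logb_choose (k := k) hkn]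

/-- converse for lossless compression of a discrete k-sparse source:
`X` is uniform over the vectors with exactly `k` nonzero entries drawn from the
finite alphabet `A` (support uniform over the `C(n,k)` patterns, entries i.i.d.
uniform on `A` given the support). If the reconstruction `X̂` has entropy at most
`nR` and Fano's term satisfies `H(X | X̂) ≤ n εₙ`, then
`nR ≥ k log₂(n/k) + k log₂|A| − n εₙ`. -/
theorem stmt19 {Ω : Type*} [MeasurableSpace Ω] (μ : Measure Ω) [IsProbabilityMeasure μ]
    (n k : ℕ) (hk : 1 ≤ k) (hkn : k ≤ n)
    (A : Finset ℝ) (hA : A.Nonempty) (h0A : (0 : ℝ) ∉ A)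
    (X Xhat : Ω → Fin n → ℝ)
    (V : Finset (Fin n → ℝ))
    (hV : ∀ x : Fin n → ℝ, x ∈ V ↔
      ((Finset.univ.filter fun j => x j ≠ 0).card = k ∧ ∀ j, x j ≠ 0 → x j ∈ A))
    (hXV : ∀ ω, X ω ∈ V)
    (hunif : ∀ x ∈ V, (μ (X ⁻¹' {x})).toReal = 1 / (n.choose k * A.card ^ k))
    (S2 : Finset (Fin n → ℝ)) (hS2 : ∀ ω, Xhat ω ∈ S2)
    (R εn : ℝ)
    (hrate : ent μ Xhat S2 ≤ n * R)
    (hfano : ent μ (fun ω => (X ω, Xhat ω)) (V ×ˢ S2) - ent μ Xhat S2 ≤ n * εn) :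
    k * Real.logb 2 ((n : ℝ) / k) + k * Real.logb 2 (A.card) - n * εn ≤ n * R :=
  stmt19_general μ n k hkn A hA X Xhat V hXV hunif S2 hS2 R εn hrate hfano
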